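/- One tree-boosting update never increases the L² norm of the remainder: with λ = (1+p)⁻¹ and r' = r − λ Σ_{j=0}^p Σ_{i=1}^m (∫ r·g^j_i dμ / μ(R^j_i)) · g^j_i, one has ‖r'‖_{L²(μ)} ≤ ‖r‖_{L²(μ)}. In particular, both the empirical remainders (with μ the empirical measure on the sample) and the population remainders (with μ the data distribution) of tree boosted VCM satisfy ‖r̂_{b+1}‖ₙ ≤ ‖r̂_b‖ₙ and ‖r_{b+1}‖ ≤ ‖r_b‖. -/

import Mathlib

open MeasureTheory
open scoped ENNReal NNReal

section Aux

variable {Ω : Type*} [MeasurableSpace Ω] {μ : Measure Ω}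

private lemma integrable_mul_of_memL2 {f g : Ω → ℝ} (hf : MemLp f 2 μ) (hg : MemLp g 2 μ) :
    Integrable (fun x => f x * g x) μ := by
  rw [← memLp_one_iff_integrable]
  have h12 : (1 : ℝ≥0∞) / 1 = 1 / 2 + 1 / 2 := by
    rw [ENNReal.add_halves]; simp
  exact hg.smul (φ := f) hf

private lemma memL2_of_le_indicator {s : Set Ω} {g : Ω → ℝ} (hs : MeasurableSet s)
    (hfin : μ s < ⊤) (hgmeas : Measurable g)
    (hgbd : ∀ᵐ x ∂μ, |g x| ≤ Set.indicator s (fun _ => (1 : ℝ)) x) :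
    MemLp g 2 μ := by
  refine ⟨hgmeas.aestronglyMeasurable, ?_⟩
  have h1 : eLpNorm g 2 μ ≤ eLpNorm (Set.indicator s (fun _ => (1 : ℝ))) 2 μ := by
    apply eLpNorm_mono_ae
    filter_upwards [hgbd] with x hx
    rw [Real.norm_eq_abs, Real.norm_eq_abs]
    exact hx.trans (le_abs_self _)
  refine lt_of_le_of_lt h1 ?_
  rw [eLpNorm_indicator_const hs two_ne_zero ENNReal.ofNat_ne_top]
  exact ENNReal.mul_lt_top (by simp) (ENNReal.rpow_lt_top_of_nonneg (by positivity) hfin.ne)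

/-- Per-tree step: subtracting the tree projection does not increase the L² integral. -/
private lemma key_step (μ : Measure Ω) (m : ℕ) (R : Fin m → Set Ω) (g : Fin m → Ω → ℝ)
    (hRmeas : ∀ i, MeasurableSet (R i))
    (hdisj : ∀ i i' : Fin m, i ≠ i' → Disjoint (R i) (R i'))
    (hpos : ∀ i, 0 < μ (R i)) (hfin : ∀ i, μ (R i) < ⊤)
    (hg2 : ∀ i, MemLp (g i) 2 μ)
    (hgbd : ∀ i, ∀ᵐ x ∂μ, |g i x| ≤ Set.indicator (R i) (fun _ => (1 : ℝ)) x)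
    (r : Ω → ℝ) (hr : MemLp r 2 μ) :
    ∫ x, (r x - ∑ i : Fin m, ((∫ y, r y * g i y ∂μ) / (μ (R i)).toReal) * g i x) ^ 2 ∂μ ≤
      ∫ x, r x ^ 2 ∂μ := by
  set c : Fin m → ℝ := fun i => (∫ y, r y * g i y ∂μ) / (μ (R i)).toReal with hc
  have hμpos : ∀ i, 0 < (μ (R i)).toReal := fun i =>
    ENNReal.toReal_pos (hpos i).ne' (hfin i).ne
  -- integrability facts
  have hint_rg : ∀ i, Integrable (fun x => r x * g i x) μ := fun i =>
    integrable_mul_of_memL2 hr (hg2 i)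
  have hint_gg : ∀ i i', Integrable (fun x => g i x * g i' x) μ := fun i i' =>
    integrable_mul_of_memL2 (hg2 i) (hg2 i')
  have hT2 : MemLp (fun x => ∑ i : Fin m, c i * g i x) 2 μ :=
    memLp_finset_sum _ (fun i _ => (hg2 i).const_mul (c i))
  have hint_rT : Integrable (fun x => r x * ∑ i : Fin m, c i * g i x) μ :=
    integrable_mul_of_memL2 hr hT2
  -- ∫ r g i = c i * μ (R i)
  have hrg : ∀ i, ∫ x, r x * g i x ∂μ = c i * (μ (R i)).toReal := fun i =>
    (div_mul_cancel₀ _ (hμpos i).ne').symm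
  -- orthogonality for distinct cells
  have horth : ∀ i i', i ≠ i' → ∫ x, g i x * g i' x ∂μ = 0 := by
    intro i i' hne
    apply integral_eq_zero_of_ae
    filter_upwards [hgbd i, hgbd i'] with x h1 h2
    by_cases hx : x ∈ R i
    · have hx' : x ∉ R i' := Set.disjoint_left.mp (hdisj i i' hne) hx
      have hz : g i' x = 0 := by
        rw [Set.indicator_of_notMem hx'] at h2
        exact abs_nonpos_iff.mp h2
      simp [hz]
    · have hz : g i x = 0 := by
        rw [Set.indicator_of_notMem hx] at h1
        exact abs_nonpos_iff.mp h1
      simp [hz]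
  -- indicator integral
  have hind_int : ∀ i, Integrable (Set.indicator (R i) (fun _ => (1 : ℝ))) μ := by
    intro i
    rw [integrable_indicator_iff (hRmeas i)]
    exact integrableOn_const (hfin i).ne
  -- ∫ g i ^ 2 ≤ μ (R i)
  have hgsq : ∀ i, ∫ x, g i x ^ 2 ∂μ ≤ (μ (R i)).toReal := by
    intro i
    have hle : ∫ x, g i x ^ 2 ∂μ ≤ ∫ x, Set.indicator (R i) (fun _ => (1 : ℝ)) x ∂μ := by
      apply integral_mono_ae (hg2 i).integrable_sq (hind_int i)
      filter_upwards [hgbd i] with x hx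
      by_cases hmem : x ∈ R i
      · rw [Set.indicator_of_mem hmem] at hx ⊢
        nlinarith [sq_abs (g i x), abs_nonneg (g i x)]
      · rw [Set.indicator_of_notMem hmem] at hx ⊢
        have hz : g i x = 0 := abs_nonpos_iff.mp hx
        simp [hz]
    rwa [integral_indicator_const _ (hRmeas i), smul_eq_mul, mul_one] at hle
  -- the quantity S
  set S : ℝ := ∑ i : Fin m, c i ^ 2 * (μ (R i)).toReal with hS
  have hS0 : 0 ≤ S :=
    Finset.sum_nonneg fun i _ => mul_nonneg (sq_nonneg _) (hμpos i).le
  -- ∫ r T = S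
  have hrT : ∫ x, r x * ∑ i : Fin m, c i * g i x ∂μ = S := by
    have hre : (fun x => r x * ∑ i : Fin m, c i * g i x)
        = fun x => ∑ i : Fin m, c i * (r x * g i x) := by
      funext x
      rw [Finset.mul_sum]
      exact Finset.sum_congr rfl fun i _ => by ring
    rw [hre, integral_finset_sum _ (fun i _ => (hint_rg i).const_mul (c i))]
    refine Finset.sum_congr rfl fun i _ => ?_
    rw [integral_const_mul, hrg i]
    ring
  -- ∫ T^2 ≤ S
  have hTT : ∫ x, (∑ i : Fin m, c i * g i x) ^ 2 ∂μ ≤ S := by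
    have hre : (fun x => (∑ i : Fin m, c i * g i x) ^ 2)
        = fun x => ∑ i : Fin m, ∑ i' : Fin m, (c i * c i') * (g i x * g i' x) := by
      funext x
      rw [sq, Finset.sum_mul_sum]
      exact Finset.sum_congr rfl fun i _ => Finset.sum_congr rfl fun i' _ => by ring
    rw [hre, integral_finset_sum _ (fun i _ =>
      integrable_finset_sum _ (fun i' _ => ((hint_gg i i').const_mul _)))]
    have hinner : ∀ i : Fin m,
        ∫ x, ∑ i' : Fin m, (c i * c i') * (g i x * g i' x) ∂μ
          = c i ^ 2 * ∫ x, g i x ^ 2 ∂μ := by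
      intro i
      rw [integral_finset_sum _ (fun i' _ => ((hint_gg i i').const_mul _))]
      rw [Finset.sum_eq_single i]
      · rw [integral_const_mul]
        simp_rw [← sq]
      · intro i' _ hne
        rw [integral_const_mul, horth i i' (Ne.symm hne), mul_zero]
      · intro habs
        exact absurd (Finset.mem_univ i) habs
    rw [Finset.sum_congr rfl fun i _ => hinner i]
    exact Finset.sum_le_sum fun i _ =>
      mul_le_mul_of_nonneg_left (hgsq i) (sq_nonneg _)
  -- put it together
  have hexp : ∫ x, (r x - ∑ i : Fin m, c i * g i x) ^ 2 ∂μ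
      = ∫ x, r x ^ 2 ∂μ - 2 * S + ∫ x, (∑ i : Fin m, c i * g i x) ^ 2 ∂μ := by
    have hre : (fun x => (r x - ∑ i : Fin m, c i * g i x) ^ 2)
        = fun x => (r x ^ 2 - 2 * (r x * ∑ i : Fin m, c i * g i x))
            + (∑ i : Fin m, c i * g i x) ^ 2 := by
      funext x; ring
    have h1 : Integrable (fun x => r x ^ 2 - 2 * (r x * ∑ i : Fin m, c i * g i x)) μ :=
      hr.integrable_sq.sub (hint_rT.const_mul 2)
    rw [hre, integral_add h1 hT2.integrable_sq,
      integral_sub hr.integrable_sq (hint_rT.const_mul 2), integral_const_mul, hrT]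
  rw [hexp]
  linarith [hTT, hS0]

private lemma lintegral_sq_eq {h : Ω → ℝ} (hh : MemLp h 2 μ) :
    ∫⁻ x, ‖h x‖ₑ ^ (2 : ℝ≥0∞).toReal ∂μ = ENNReal.ofReal (∫ x, h x ^ 2 ∂μ) := by
  rw [ofReal_integral_eq_lintegral_ofReal hh.integrable_sq
    (Filter.Eventually.of_forall fun x => sq_nonneg _)]
  apply lintegral_congr fun x => ?_
  rw [ENNReal.toReal_ofNat, show ((2:ℝ)) = ((2:ℕ):ℝ) by norm_num, ENNReal.rpow_natCast,
    Real.enorm_eq_ofReal_abs, ← ENNReal.ofReal_pow (abs_nonneg _), sq_abs]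

private lemma eLpNorm_two_le_of_sq_integral_le {f g : Ω → ℝ} (hf : MemLp f 2 μ)
    (hg : MemLp g 2 μ) (hle : ∫ x, f x ^ 2 ∂μ ≤ ∫ x, g x ^ 2 ∂μ) :
    eLpNorm f 2 μ ≤ eLpNorm g 2 μ := by
  rw [eLpNorm_eq_lintegral_rpow_enorm_toReal two_ne_zero ENNReal.ofNat_ne_top,
    eLpNorm_eq_lintegral_rpow_enorm_toReal two_ne_zero ENNReal.ofNat_ne_top]
  apply ENNReal.rpow_le_rpow _ (by positivity)
  rw [lintegral_sq_eq hf, lintegral_sq_eq hg]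
  exact ENNReal.ofReal_le_ofReal hle

end Aux

/-- **One tree-boosting update never increases the L² norm of the remainder.**
With `λ = (1+p)⁻¹` and
`r' = r − λ Σ_{j=0}^p Σ_{i=1}^m (∫ r·g^j_i dμ / μ(R^j_i)) · g^j_i`,
one has `‖r'‖_{L²(μ)} ≤ ‖r‖_{L²(μ)}`.  Here, for each coordinate `j`, the sets
`R^j_1, …, R^j_m` are pairwise disjoint measurable sets of positive finite measure whose
union has full measure (the terminal nodes of the `j`-th tree), and `|g^j_i| ≤ 1_{R^j_i}`
a.e.  In particular both the empirical remainders (with `μ` the empirical measure on the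
sample) and the population remainders (with `μ` the data distribution) of tree boosted VCM
satisfy `‖r̂_{b+1}‖ₙ ≤ ‖r̂_b‖ₙ` and `‖r_{b+1}‖ ≤ ‖r_b‖`. -/
theorem tree_boosting_update_l2_nonincreasing {Ω : Type*} [MeasurableSpace Ω]
    (μ : Measure Ω) (p m : ℕ) (lam : ℝ) (hlam : lam = ((p : ℝ) + 1)⁻¹)
    (R : Fin (p + 1) → Fin m → Set Ω) (g : Fin (p + 1) → Fin m → Ω → ℝ)
    (hRmeas : ∀ j i, MeasurableSet (R j i))
    (hdisj : ∀ j, ∀ i i' : Fin m, i ≠ i' → Disjoint (R j i) (R j i'))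
    (hcover : ∀ j, μ (⋃ i, R j i)ᶜ = 0)
    (hpos : ∀ j i, 0 < μ (R j i)) (hfin : ∀ j i, μ (R j i) < ⊤)
    (hgmeas : ∀ j i, Measurable (g j i))
    (hgbd : ∀ j i, ∀ᵐ x ∂μ, |g j i x| ≤ Set.indicator (R j i) (fun _ => (1 : ℝ)) x)
    (r : Ω → ℝ) (hr : MemLp r 2 μ) :
    eLpNorm (fun x => r x - lam * ∑ j : Fin (p + 1), ∑ i : Fin m,
        ((∫ y, r y * g j i y ∂μ) / (μ (R j i)).toReal) * g j i x) 2 μ ≤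
      eLpNorm r 2 μ := by
  have hg2 : ∀ j i, MemLp (g j i) 2 μ := fun j i =>
    memL2_of_le_indicator (hRmeas j i) (hfin j i) (hgmeas j i) (hgbd j i)
  have hlam_pos : 0 < lam := by rw [hlam]; positivity
  have hcard : lam * ((p : ℝ) + 1) = 1 := by
    rw [hlam]; field_simp
  have hh2 : ∀ j, MemLp (fun x => r x - ∑ i : Fin m,
      ((∫ y, r y * g j i y ∂μ) / (μ (R j i)).toReal) * g j i x) 2 μ := fun j =>
    hr.sub (memLp_finset_sum _ (fun i _ => (hg2 j i).const_mul _))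
  have hkey : ∀ j, ∫ x, (r x - ∑ i : Fin m,
      ((∫ y, r y * g j i y ∂μ) / (μ (R j i)).toReal) * g j i x) ^ 2 ∂μ ≤
      ∫ x, r x ^ 2 ∂μ := fun j =>
    key_step μ m (R j) (g j) (hRmeas j) (hdisj j) (hpos j) (hfin j) (hg2 j) (hgbd j) r hr
  have hfun : (fun x => r x - lam * ∑ j : Fin (p + 1), ∑ i : Fin m,
        ((∫ y, r y * g j i y ∂μ) / (μ (R j i)).toReal) * g j i x)
      = fun x => lam * ∑ j : Fin (p + 1), (r x - ∑ i : Fin m,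
        ((∫ y, r y * g j i y ∂μ) / (μ (R j i)).toReal) * g j i x) := by
    funext x
    rw [Finset.sum_sub_distrib, Finset.sum_const, Finset.card_univ, Fintype.card_fin,
      nsmul_eq_mul, mul_sub, ← mul_assoc]
    push_cast
    rw [hcard, one_mul]
  rw [hfun]
  have hf2 : MemLp (fun x => lam * ∑ j : Fin (p + 1), (r x - ∑ i : Fin m,
      ((∫ y, r y * g j i y ∂μ) / (μ (R j i)).toReal) * g j i x)) 2 μ :=
    (memLp_finset_sum _ (fun j _ => hh2 j)).const_mul lam
  apply eLpNorm_two_le_of_sq_integral_le hf2 hr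
  have hptwise : ∀ x, (lam * ∑ j : Fin (p + 1), (r x - ∑ i : Fin m,
      ((∫ y, r y * g j i y ∂μ) / (μ (R j i)).toReal) * g j i x)) ^ 2
      ≤ lam * ∑ j : Fin (p + 1), (r x - ∑ i : Fin m,
      ((∫ y, r y * g j i y ∂μ) / (μ (R j i)).toReal) * g j i x) ^ 2 := by
    intro x
    set h : Fin (p + 1) → ℝ := fun j => r x - ∑ i : Fin m,
      ((∫ y, r y * g j i y ∂μ) / (μ (R j i)).toReal) * g j i x with hh
    have h1 : (∑ j : Fin (p + 1), h j) ^ 2 ≤ ((p : ℝ) + 1) * ∑ j : Fin (p + 1), h j ^ 2 := by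
      have := sq_sum_le_card_mul_sum_sq (s := (Finset.univ : Finset (Fin (p + 1))))
        (f := h)
      rw [Finset.card_univ, Fintype.card_fin] at this
      push_cast at this
      exact this
    calc (lam * ∑ j : Fin (p + 1), h j) ^ 2
        = lam ^ 2 * (∑ j : Fin (p + 1), h j) ^ 2 := by ring
      _ ≤ lam ^ 2 * (((p : ℝ) + 1) * ∑ j : Fin (p + 1), h j ^ 2) :=
          mul_le_mul_of_nonneg_left h1 (sq_nonneg lam)
      _ = (lam * ((p : ℝ) + 1)) * (lam * ∑ j : Fin (p + 1), h j ^ 2) := by ring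
      _ = lam * ∑ j : Fin (p + 1), h j ^ 2 := by rw [hcard, one_mul]
  calc ∫ x, (lam * ∑ j : Fin (p + 1), (r x - ∑ i : Fin m,
        ((∫ y, r y * g j i y ∂μ) / (μ (R j i)).toReal) * g j i x)) ^ 2 ∂μ
      ≤ ∫ x, lam * ∑ j : Fin (p + 1), (r x - ∑ i : Fin m,
        ((∫ y, r y * g j i y ∂μ) / (μ (R j i)).toReal) * g j i x) ^ 2 ∂μ := by
        apply integral_mono hf2.integrable_sq
          ((integrable_finset_sum _ (fun j _ => (hh2 j).integrable_sq)).const_mul lam)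
        exact hptwise
    _ = lam * ∑ j : Fin (p + 1), ∫ x, (r x - ∑ i : Fin m,
        ((∫ y, r y * g j i y ∂μ) / (μ (R j i)).toReal) * g j i x) ^ 2 ∂μ := by
        rw [integral_const_mul, integral_finset_sum _ (fun j _ => (hh2 j).integrable_sq)]
    _ ≤ lam * ∑ j : Fin (p + 1), ∫ x, r x ^ 2 ∂μ := by
        apply mul_le_mul_of_nonneg_left (Finset.sum_le_sum fun j _ => hkey j) hlam_pos.le
    _ = ∫ x, r x ^ 2 ∂μ := by
        rw [Finset.sum_const, Finset.card_univ, Fintype.card_fin, nsmul_eq_mul, ← mul_assoc]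
        push_cast
        rw [hcard, one_mul]
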